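/- arXiv:2506.12521 — 2 statements merged into one kernel-verified Lean document; each statement's English description precedes it below -/
import Mathlib

section
/- Let A and ⟨0⟩ be C-hyperideals of a commutative multiplicative hyperring G and S an MCS with A ∩ S = ∅. If A is a weakly quasi S-primary hyperideal of G such that A² ≠ ⟨0⟩, then A is a quasi S-primary hyperideal of G. -/
open Set

/-- A commutative multiplicative hyperring: a commutative additive group with a
commutative, associative hyperoperation `hmul` satisfying `(-a)∘b = -(a∘b)`,
weak distributivity, and having an identity element `e` with `a ∈ e∘a`. -/
class MulHyperring (G : Type*) extends AddCommGroup G where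
  hmul : G → G → Set G
  hmul_nonempty : ∀ a b : G, (hmul a b).Nonempty
  hmul_comm : ∀ a b : G, hmul a b = hmul b a
  hmul_assoc : ∀ a b c : G, (⋃ x ∈ hmul a b, hmul x c) = ⋃ x ∈ hmul b c, hmul a x
  neg_hmul : ∀ a b : G, hmul (-a) b = (fun x => -x) '' (hmul a b)
  hmul_add : ∀ a b c : G,
    hmul a (b + c) ⊆ {x | ∃ u ∈ hmul a b, ∃ v ∈ hmul a c, x = u + v}
  e : G
  e_mem : ∀ a : G, a ∈ hmul e a

namespace MulHyperring

variable {G : Type*} [MulHyperring G]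

/-- Hyperproduct of an element with a set: `a ∘ B = ⋃ b ∈ B, a ∘ b`. -/
def smulSet (a : G) (B : Set G) : Set G := ⋃ b ∈ B, hmul a b

/-- Hyperproduct of two sets. -/
def setMul (A B : Set G) : Set G := ⋃ a ∈ A, ⋃ b ∈ B, hmul a b

/-- Hyperproduct `a₁ ∘ a₂ ∘ ⋯ ∘ aₙ` of a (nonempty) list of elements. -/
def hProd : List G → Set G
  | [] => ∅
  | [a] => {a}
  | a :: b :: l => smulSet a (hProd (b :: l))

/-- `aⁿ` as a hyperproduct. -/
def hPow (a : G) (n : ℕ) : Set G := hProd (List.replicate n a)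

/-- `A` is a hyperideal of `G`. -/
def IsHyperideal (A : Set G) : Prop :=
  A.Nonempty ∧ (∀ x ∈ A, ∀ y ∈ A, x - y ∈ A) ∧ ∀ r : G, ∀ x ∈ A, hmul r x ⊆ A

/-- `A` is a `C`-hyperideal: any finite hyperproduct meeting `A` is contained in `A`. -/
def IsCHyperideal (A : Set G) : Prop :=
  IsHyperideal A ∧ ∀ l : List G, l ≠ [] → (hProd l ∩ A).Nonempty → hProd l ⊆ A

/-- The radical of a (C-)hyperideal: `{a | aⁿ ⊆ A for some n ≥ 1}`. -/
def rad (A : Set G) : Set G := {a | ∃ n : ℕ, 1 ≤ n ∧ hPow a n ⊆ A}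

/-- The hyperideal generated by a set. -/
def idealGen (X : Set G) : Set G := ⋂₀ {A | IsHyperideal A ∧ X ⊆ A}

/-- The hyperideal product of two hyperideals. -/
def idealMul (A B : Set G) : Set G := idealGen (setMul A B)

/-- Multiplicative closed subset. -/
def IsMCS (S : Set G) : Prop :=
  e ∈ S ∧ ∀ s₁ ∈ S, ∀ s₂ ∈ S, (hmul s₁ s₂ ∩ S).Nonempty

/-- Prime hyperideal. -/
def IsPrime (P : Set G) : Prop :=
  IsHyperideal P ∧ P ≠ univ ∧ ∀ x y : G, hmul x y ⊆ P → x ∈ P ∨ y ∈ P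

/-- `S`-prime hyperideal. -/
def IsSPrime (S A : Set G) : Prop :=
  IsHyperideal A ∧ A ∩ S = ∅ ∧
    ∃ t ∈ S, ∀ u v : G, hmul u v ⊆ A → hmul t u ⊆ A ∨ hmul t v ⊆ A

/-- `S`-primary hyperideal. -/
def IsSPrimary (S A : Set G) : Prop :=
  IsHyperideal A ∧ A ∩ S = ∅ ∧
    ∃ t ∈ S, ∀ u v : G, hmul u v ⊆ A → hmul t u ⊆ A ∨ hmul t v ⊆ rad A

/-- Quasi `S`-primary hyperideal. -/
def IsQuasiSPrimary (S A : Set G) : Prop :=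
  IsHyperideal A ∧ A ∩ S = ∅ ∧
    ∃ t ∈ S, ∀ u v : G, hmul u v ⊆ A → hmul t u ⊆ rad A ∨ hmul t v ⊆ rad A

/-- Weakly quasi `S`-primary hyperideal. -/
def IsWeaklyQuasiSPrimary (S A : Set G) : Prop :=
  IsHyperideal A ∧ A ∩ S = ∅ ∧
    ∃ t ∈ S, ∀ u v : G, 0 ∉ hmul u v → hmul u v ⊆ A →
      hmul t u ⊆ rad A ∨ hmul t v ⊆ rad A

/-- Strongly quasi `S`-primary hyperideal. -/
def IsStronglyQuasiSPrimary (S A : Set G) : Prop :=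
  IsHyperideal A ∧ A ∩ S = ∅ ∧
    ∃ t ∈ S, ∀ u v : G, hmul u v ⊆ A →
      smulSet t (hPow u 2) ⊆ A ∨ hmul t v ⊆ rad A

/-- The residual `(B : x) = {y | y ∘ x ⊆ B}`. -/
def colon (B : Set G) (x : G) : Set G := {y | hmul y x ⊆ B}

end MulHyperring

/-! Write `Z = ⟨0⟩`. Given `u ∘ v ⊆ A`, we perturb `u` and `v` by elements `a, b ∈ A` so
that `0 ∉ (u + a) ∘ (v + b)`; the weak hypothesis then applies to `u + a` and `v + b`, and
the perturbation disappears again in the radical because `rad A + A ⊆ rad A`. If no such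
`a, b` existed, expanding `(u + a) ∘ (v + b)` and using that `Z` is a `C`-hyperideal would
put, in turn (taking `a` or `b` to be `0`), `u ∘ v`, `u ∘ A`, `A ∘ v` and finally `A ∘ A`
inside `Z`, forcing `A² = ⟨0⟩`. -/

namespace MulHyperring

open scoped Pointwise

variable {G : Type*} [MulHyperring G]

theorem hmul_add_subset (a b c : G) : hmul a (b + c) ⊆ hmul a b + hmul a c := by
  intro x hx
  obtain ⟨y, hy, z, hz, rfl⟩ := hmul_add a b c hx
  exact add_mem_add hy hz

theorem add_hmul_subset (a b c : G) : hmul (a + b) c ⊆ hmul a c + hmul b c := by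
  simpa only [hmul_comm _ c] using hmul_add_subset c a b

theorem add_hmul_add_subset (u a v b : G) :
    hmul (u + a) (v + b) ⊆ hmul u v + hmul u b + (hmul a v + hmul a b) :=
  (add_hmul_subset u a _).trans (add_subset_add (hmul_add_subset ..) (hmul_add_subset ..))

namespace IsHyperideal

variable {A : Set G}

def toAddSubgroup (hA : IsHyperideal A) : AddSubgroup G :=
  AddSubgroup.ofSub A hA.1 fun x hx y hy => by
    simpa only [sub_eq_add_neg] using hA.2.1 x hx y hy

theorem zero_mem (hA : IsHyperideal A) : (0 : G) ∈ A :=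
  hA.toAddSubgroup.zero_mem

theorem neg_mem (hA : IsHyperideal A) {x : G} (hx : x ∈ A) : -x ∈ A :=
  hA.toAddSubgroup.neg_mem hx

theorem add_subset {X Y : Set G} (hA : IsHyperideal A) (hX : X ⊆ A) (hY : Y ⊆ A) :
    X + Y ⊆ A :=
  Set.add_subset_iff.2 fun _ hx _ hy => hA.toAddSubgroup.add_mem (hX hx) (hY hy)

theorem hmul_subset_left (hA : IsHyperideal A) (r : G) {x : G} (hx : x ∈ A) : hmul r x ⊆ A :=
  hA.2.2 r x hx

theorem hmul_subset_right (hA : IsHyperideal A) {x : G} (hx : x ∈ A) (r : G) : hmul x r ⊆ A :=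
  hmul_comm x r ▸ hA.hmul_subset_left r hx

theorem add_hmul_add_subset {u v a b : G} (hA : IsHyperideal A) (huv : hmul u v ⊆ A)
    (ha : a ∈ A) (hb : b ∈ A) : hmul (u + a) (v + b) ⊆ A :=
  (MulHyperring.add_hmul_add_subset u a v b).trans <| hA.add_subset
    (hA.add_subset huv (hA.hmul_subset_left u hb)) (hA.add_subset (hA.hmul_subset_right ha v)
      (hA.hmul_subset_right ha b))

theorem hPow_add_subset (hA : IsHyperideal A) (p : G) {q : G} (hq : q ∈ A) (n : ℕ) :
    hPow (p + q) (n + 1) ⊆ hPow p (n + 1) + A := by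
  induction n with
  | zero => simpa [hPow, hProd] using hq
  | succ n ih =>
    intro x hx
    obtain ⟨y, hy, hxy⟩ := mem_iUnion₂.1 hx
    obtain ⟨c, hc, a, ha, rfl⟩ := ih hy
    have hexpand := MulHyperring.add_hmul_add_subset p q c a
    rw [add_assoc] at hexpand
    obtain ⟨pc, hpc, rest, hrest, rfl⟩ := (hexpand.trans (add_subset_add_left <|
      hA.add_subset (hA.hmul_subset_left p ha) <|
        hA.add_subset (hA.hmul_subset_right hq c) (hA.hmul_subset_left q ha))) hxy
    exact add_mem_add (mem_biUnion hc hpc) hrest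

theorem rad_add_subset (hA : IsHyperideal A) : rad A + A ⊆ rad A := by
  rintro _ ⟨p, ⟨n, hn, hp⟩, q, hq, rfl⟩
  obtain ⟨m, rfl⟩ := Nat.exists_eq_add_of_le' hn
  exact ⟨m + 1, hn, (hA.hPow_add_subset p hq m).trans (hA.add_subset hp subset_rfl)⟩

theorem hmul_subset_rad_of_hmul_add_subset (hA : IsHyperideal A) {t u a : G} (ha : a ∈ A)
    (h : hmul t (u + a) ⊆ rad A) : hmul t u ⊆ rad A :=
  calc hmul t u = hmul t (u + a + -a) := by rw [add_neg_cancel_right]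
    _ ⊆ hmul t (u + a) + hmul t (-a) := hmul_add_subset ..
    _ ⊆ rad A + A := add_subset_add h (hA.hmul_subset_left t (hA.neg_mem ha))
    _ ⊆ rad A := hA.rad_add_subset

end IsHyperideal

theorem idealGen_isHyperideal (X : Set G) : IsHyperideal (idealGen X) :=
  ⟨⟨0, fun _ hB => hB.1.zero_mem⟩, fun x hx y hy B hB => hB.1.2.1 x (hx B hB) y (hy B hB),
    fun r x hx _ hz B hB => hB.1.2.2 r x (hx B hB) hz⟩

theorem idealGen_subset {X B : Set G} (hB : IsHyperideal B) (hXB : X ⊆ B) : idealGen X ⊆ B :=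
  fun _ hx => hx B ⟨hB, hXB⟩

theorem idealGen_eq_idealGen_zero {X : Set G} (hX : X ⊆ idealGen {0}) :
    idealGen X = idealGen {0} :=
  (idealGen_subset (idealGen_isHyperideal _) hX).antisymm <|
    idealGen_subset (idealGen_isHyperideal X)
      (singleton_subset_iff.2 (idealGen_isHyperideal X).zero_mem)

theorem hProd_pair (a b : G) : hProd [a, b] = hmul a b := by
  simp [hProd, smulSet]

namespace IsCHyperideal

variable {Z : Set G}

theorem hmul_subset (hZ : IsCHyperideal Z) {a b : G} (h : (hmul a b ∩ Z).Nonempty) :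
    hmul a b ⊆ Z := by
  simpa only [hProd_pair] using hZ.2 [a, b] (List.cons_ne_nil _ _) (by rwa [hProd_pair])

theorem hmul_subset_of_zero_mem_add_hmul_add (hZ : IsCHyperideal Z) {u v a b : G}
    (huv : hmul u v ⊆ Z) (hub : hmul u b ⊆ Z) (hav : hmul a v ⊆ Z)
    (h0 : (0 : G) ∈ hmul (u + a) (v + b)) : hmul a b ⊆ Z := by
  have hexpand := add_hmul_add_subset u a v b
  rw [← add_assoc] at hexpand
  obtain ⟨x, hx, y, hy, hxy⟩ := hexpand h0
  refine hZ.hmul_subset ⟨y, hy, ?_⟩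
  rw [eq_neg_of_add_eq_zero_right hxy]
  exact hZ.1.neg_mem (hZ.1.add_subset (hZ.1.add_subset huv hub) hav hx)

theorem exists_zero_notMem_add_hmul_add {A : Set G} (hZ : IsCHyperideal Z) (hA : IsHyperideal A)
    (hAZ : ¬ setMul A A ⊆ Z) (u v : G) :
    ∃ a ∈ A, ∃ b ∈ A, (0 : G) ∉ hmul (u + a) (v + b) := by
  by_contra! h
  have hmul_zero : ∀ x, hmul x 0 ⊆ Z := fun x => hZ.1.hmul_subset_left x hZ.1.zero_mem
  have zero_hmul : ∀ x, hmul 0 x ⊆ Z := fun x => hZ.1.hmul_subset_right hZ.1.zero_mem x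
  have huv : hmul u v ⊆ Z :=
    hZ.hmul_subset ⟨0, by simpa using h 0 hA.zero_mem 0 hA.zero_mem, hZ.1.zero_mem⟩
  have hu : ∀ b ∈ A, hmul u b ⊆ Z := fun b hb =>
    hZ.hmul_subset_of_zero_mem_add_hmul_add (zero_hmul v) (zero_hmul b) huv
      (by simpa using h 0 hA.zero_mem b hb)
  have hv : ∀ a ∈ A, hmul a v ⊆ Z := fun a ha =>
    hZ.hmul_subset_of_zero_mem_add_hmul_add (hmul_zero u) huv (hmul_zero a)
      (by simpa using h a ha 0 hA.zero_mem)
  refine hAZ (iUnion₂_subset fun a ha => iUnion₂_subset fun b hb => ?_)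
  exact hZ.hmul_subset_of_zero_mem_add_hmul_add huv (hu b hb) (hv a ha) (h a ha b hb)

end IsCHyperideal

end MulHyperring

open MulHyperring in
theorem weaklyQuasiSPrimary_sq_ne_zero_general {G : Type*} [MulHyperring G] (A S : Set G)
    (h0C : IsCHyperideal (idealGen {0} : Set G))
    (hw : IsWeaklyQuasiSPrimary S A) (hsq : idealMul A A ≠ idealGen {0}) :
    IsQuasiSPrimary S A := by
  obtain ⟨hA, hAS, t, htS, hwt⟩ := hw
  have hAA : ¬ setMul A A ⊆ idealGen {0} := fun h => hsq (idealGen_eq_idealGen_zero h)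
  refine ⟨hA, hAS, t, htS, fun u v huv => ?_⟩
  obtain ⟨a, ha, b, hb, h0⟩ := h0C.exists_zero_notMem_add_hmul_add hA hAA u v
  exact (hwt _ _ h0 (hA.add_hmul_add_subset huv ha hb)).imp
    (hA.hmul_subset_rad_of_hmul_add_subset ha) (hA.hmul_subset_rad_of_hmul_add_subset hb)

open MulHyperring in
theorem weaklyQuasiSPrimary_sq_ne_zero {G : Type*} [MulHyperring G] (A S : Set G) (hA : IsCHyperideal A)
    (hS : IsMCS S) (hAS : A ∩ S = ∅)
    (h0C : IsCHyperideal (idealGen {0} : Set G))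
    (hw : IsWeaklyQuasiSPrimary S A) (hsq : idealMul A A ≠ idealGen {0}) :
    IsQuasiSPrimary S A :=
  weaklyQuasiSPrimary_sq_ne_zero_general A S h0C hw hsq
end

section
/- Let A be a C-hyperideal of a commutative multiplicative hyperring G and S an MCS with A ∩ S = ∅ such that t∘rad(A)² ⊆ A for some t ∈ S. Then A is a strongly quasi S-primary hyperideal of G if and only if A is a quasi S-primary hyperideal of G. -/
open Set

/-!
If `t ∘ u² ⊆ A`, every `x ∈ t ∘ u` has `x² ⊆ t ∘ t ∘ u² ⊆ A`, so `t ∘ u ⊆ rad A`; hence strongly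
quasi `S`-primary implies quasi `S`-primary with the same witness. Conversely, if `t₂` witnesses
that `A` is quasi `S`-primary and `t ∘ rad(A)² ⊆ A`, take `t' ∈ t ∘ s ∩ S` with `s ∈ t₂ ∘ t₂ ∩ S`:
then `t' ∘ u² ⊆ t ∘ (t₂ ∘ u)(t₂ ∘ u) ⊆ t ∘ rad(A)² ⊆ A` when `t₂ ∘ u ⊆ rad A`, and `t' ∘ v ⊆ rad A`
when `t₂ ∘ v ⊆ rad A`, because the radical of a hyperideal absorbs hyperproducts.
-/

namespace MulHyperring

variable {G : Type*} [MulHyperring G]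

theorem smulSet_mono (a : G) {B C : Set G} (h : B ⊆ C) : smulSet a B ⊆ smulSet a C :=
  biUnion_subset_biUnion_left h

theorem smulSet_singleton (a b : G) : smulSet a {b} = hmul a b := by
  simp [smulSet]

theorem setMul_mono {B B' C C' : Set G} (hB : B ⊆ B') (hC : C ⊆ C') :
    setMul B C ⊆ setMul B' C' :=
  biUnion_mono hB fun _ _ => biUnion_subset_biUnion_left hC

theorem smulSet_subset_setMul {x : G} {B : Set G} (hx : x ∈ B) (C : Set G) :
    smulSet x C ⊆ setMul B C :=
  subset_biUnion_of_mem (u := fun x => ⋃ c ∈ C, hmul x c) hx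

theorem smulSet_smulSet (a b : G) (C : Set G) :
    smulSet a (smulSet b C) = setMul (hmul a b) C := by
  ext y
  have hassoc (c : G) := Set.ext_iff.1 (hmul_assoc a b c) y
  simp only [smulSet, setMul, mem_iUnion, exists_prop] at hassoc ⊢
  constructor
  · rintro ⟨w, ⟨c, hc, hw⟩, hy⟩
    obtain ⟨x, hx, hyx⟩ := (hassoc c).2 ⟨w, hw, hy⟩
    exact ⟨x, hx, c, hc, hyx⟩
  · rintro ⟨x, hx, c, hc, hyx⟩
    obtain ⟨w, hw, hy⟩ := (hassoc c).1 ⟨x, hx, hyx⟩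
    exact ⟨w, ⟨c, hc, hw⟩, hy⟩

theorem smulSet_subset_smulSet_smulSet {a b x : G} (hx : x ∈ hmul a b) (C : Set G) :
    smulSet x C ⊆ smulSet a (smulSet b C) :=
  smulSet_smulSet a b C ▸ smulSet_subset_setMul hx C

theorem smulSet_comm (a b : G) (C : Set G) :
    smulSet a (smulSet b C) = smulSet b (smulSet a C) := by
  rw [smulSet_smulSet, smulSet_smulSet, hmul_comm]

theorem iterate_smulSet_comm (a b : G) (k : ℕ) (C : Set G) :
    smulSet b ((smulSet a)^[k] C) = (smulSet a)^[k] (smulSet b C) := by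
  induction k generalizing C with
  | zero => rfl
  | succ k ih => rw [Function.iterate_succ_apply, Function.iterate_succ_apply, ih, smulSet_comm]

theorem hPow_one (a : G) : hPow a 1 = {a} := rfl

theorem hPow_add_two (a : G) (n : ℕ) : hPow a (n + 2) = smulSet a (hPow a (n + 1)) := rfl

theorem hPow_subset_iterate_smulSet {a r x : G} (hx : x ∈ hmul a r) (k : ℕ) :
    hPow x (k + 1) ⊆ (smulSet a)^[k + 1] (hPow r (k + 1)) := by
  induction k with
  | zero => simpa [hPow_one, smulSet_singleton] using hx
  | succ k ih =>
    calc hPow x (k + 2) = smulSet x (hPow x (k + 1)) := hPow_add_two x k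
      _ ⊆ smulSet x ((smulSet a)^[k + 1] (hPow r (k + 1))) := smulSet_mono x ih
      _ ⊆ smulSet a (smulSet r ((smulSet a)^[k + 1] (hPow r (k + 1)))) :=
          smulSet_subset_smulSet_smulSet hx _
      _ = (smulSet a)^[k + 2] (hPow r (k + 2)) := by
          rw [iterate_smulSet_comm, ← hPow_add_two, ← Function.iterate_succ_apply' (smulSet a)]

theorem smulSet_hPow_two_subset_setMul {a s : G} (hs : s ∈ hmul a a) (u : G) :
    smulSet s (hPow u 2) ⊆ setMul (hmul a u) (hmul a u) :=
  calc smulSet s (hPow u 2) ⊆ smulSet a (smulSet a (smulSet u {u})) := by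
        rw [hPow_add_two, hPow_one]; exact smulSet_subset_smulSet_smulSet hs _
    _ = setMul (hmul a u) (hmul a u) := by
        rw [smulSet_comm a u, smulSet_smulSet, smulSet_singleton]

theorem setMul_subset_idealMul (B C : Set G) : setMul B C ⊆ idealMul B C :=
  fun _ hx _ hI => hI.2 hx

namespace IsHyperideal

variable {A : Set G}

theorem smulSet_subset (hA : IsHyperideal A) (r : G) {B : Set G} (hB : B ⊆ A) :
    smulSet r B ⊆ A :=
  iUnion₂_subset fun b hb => hA.2.2 r b (hB hb)

theorem iterate_smulSet_subset (hA : IsHyperideal A) (a : G) (k : ℕ) {B : Set G}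
    (hB : B ⊆ A) : (smulSet a)^[k] B ⊆ A := by
  induction k with
  | zero => exact hB
  | succ k ih => rw [Function.iterate_succ_apply']; exact hA.smulSet_subset a ih

theorem hmul_subset_rad (hA : IsHyperideal A) (a : G) {r : G} (hr : r ∈ rad A) :
    hmul a r ⊆ rad A := by
  obtain ⟨n, hn, hrn⟩ := hr
  obtain ⟨k, rfl⟩ := Nat.exists_eq_add_of_le' hn
  exact fun x hx => ⟨k + 1, k.succ_pos,
    (hPow_subset_iterate_smulSet hx k).trans (hA.iterate_smulSet_subset a _ hrn)⟩

theorem smulSet_subset_rad (hA : IsHyperideal A) (a : G) {B : Set G} (hB : B ⊆ rad A) :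
    smulSet a B ⊆ rad A :=
  iUnion₂_subset fun _ hb => hA.hmul_subset_rad a (hB hb)

theorem hmul_subset_rad_of_smulSet_hPow_two_subset (hA : IsHyperideal A) {t u : G}
    (h : smulSet t (hPow u 2) ⊆ A) : hmul t u ⊆ rad A :=
  fun _ hx => ⟨2, one_le_two,
    (hPow_subset_iterate_smulSet hx 1).trans (hA.iterate_smulSet_subset t 1 h)⟩

end IsHyperideal

variable {S A : Set G}

theorem IsStronglyQuasiSPrimary.isQuasiSPrimary (h : IsStronglyQuasiSPrimary S A) :
    IsQuasiSPrimary S A := by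
  obtain ⟨hA, hAS, t, htS, ht⟩ := h
  refine ⟨hA, hAS, t, htS, fun u v huv => ?_⟩
  exact (ht u v huv).imp_left hA.hmul_subset_rad_of_smulSet_hPow_two_subset

theorem IsQuasiSPrimary.isStronglyQuasiSPrimary (h : IsQuasiSPrimary S A) (hS : IsMCS S)
    (ht : ∃ t ∈ S, smulSet t (idealMul (rad A) (rad A)) ⊆ A) :
    IsStronglyQuasiSPrimary S A := by
  obtain ⟨hA, hAS, t₂, ht₂S, ht₂⟩ := h
  obtain ⟨t, htS, htA⟩ := ht
  obtain ⟨s, hs, hsS⟩ := hS.2 t₂ ht₂S t₂ ht₂S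
  obtain ⟨t', ht', ht'S⟩ := hS.2 t htS s hsS
  refine ⟨hA, hAS, t', ht'S, fun u v huv => (ht₂ u v huv).imp (fun hu => ?_) (fun hv => ?_)⟩
  · calc smulSet t' (hPow u 2) ⊆ smulSet t (smulSet s (hPow u 2)) :=
          smulSet_subset_smulSet_smulSet ht' _
      _ ⊆ smulSet t (idealMul (rad A) (rad A)) :=
          smulSet_mono t <| (smulSet_hPow_two_subset_setMul hs u).trans <|
            (setMul_mono hu hu).trans (setMul_subset_idealMul _ _)
      _ ⊆ A := htA
  · have hv' : smulSet t₂ {v} ⊆ rad A := (smulSet_singleton t₂ v).symm ▸ hv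
    calc hmul t' v = smulSet t' {v} := (smulSet_singleton t' v).symm
      _ ⊆ smulSet t (smulSet t₂ (smulSet t₂ {v})) :=
          (smulSet_subset_smulSet_smulSet ht' _).trans
            (smulSet_mono t (smulSet_subset_smulSet_smulSet hs _))
      _ ⊆ rad A := hA.smulSet_subset_rad t (hA.smulSet_subset_rad t₂ hv')

end MulHyperring

open MulHyperring in
theorem stronglyQuasiSPrimary_iff_quasi_general {G : Type*} [MulHyperring G] (A S : Set G)
    (hS : IsMCS S)
    (ht : ∃ t ∈ S, smulSet t (idealMul (rad A) (rad A)) ⊆ A) :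
    IsStronglyQuasiSPrimary S A ↔ IsQuasiSPrimary S A :=
  ⟨IsStronglyQuasiSPrimary.isQuasiSPrimary, fun h => h.isStronglyQuasiSPrimary hS ht⟩

open MulHyperring in
theorem stronglyQuasiSPrimary_iff_quasi {G : Type*} [MulHyperring G] (A S : Set G) (hA : IsCHyperideal A)
    (hS : IsMCS S) (hAS : A ∩ S = ∅)
    (ht : ∃ t ∈ S, smulSet t (idealMul (rad A) (rad A)) ⊆ A) :
    IsStronglyQuasiSPrimary S A ↔ IsQuasiSPrimary S A :=
  stronglyQuasiSPrimary_iff_quasi_general A S hS ht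
end
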